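/- For every prime p, the endomorphism monoid End(G_{(1,0)}^(p)) of the JK-group G_{(1,0)}^(p) is not commutative; moreover the endomorphism monoid End(G_{(1,1)}^(2)) of the JK-group G_{(1,1)}^(2) is not commutative. -/

import Mathlib

/-!
All relators of `G_λ` are commutators or `p`-th powers times commutators, so any assignment of
the generators to elements of an abelian group of exponent `p` extends to a homomorphism. Given
`x` with `x ^ p = 1`, let `σ_k` send the `k`-th generator to `x` and the others to `1`. If
`σ_k x = x ≠ 1` and `l ≠ k`, then `σ_k ∘ σ_l` and `σ_l ∘ σ_k` take the values `x` and `1` on the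
`l`-th generator. For `λ = (1,0)` take `x = a₁⁻¹a₂` and `k = a₂`; for `p = 2`, `λ = (1,1)` take
`x = a₁a₂b₂` and `k = b₂`, where `x² = [a₁,b₁]² = [a₁²,b₁] = 1` is a computation in class two.
A character to `ℤ/p` shows `x ≠ 1`.
-/

def gcomm {G : Type*} [Group G] (x y : G) : G := x⁻¹ * y⁻¹ * x * y

def jkRels (p : ℕ) (lam : ℕ × ℕ) : Set (FreeGroup (Fin 4)) :=
  {r | ∃ i j k : Fin 4,
      r = gcomm (gcomm (FreeGroup.of i) (FreeGroup.of j)) (FreeGroup.of k)} ∪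
  {FreeGroup.of 0 ^ p * (gcomm (FreeGroup.of 0) (FreeGroup.of 2))⁻¹,
   FreeGroup.of 1 ^ p *
     (gcomm (FreeGroup.of 0) (FreeGroup.of 2 ^ lam.1 * FreeGroup.of 3 ^ lam.2))⁻¹,
   FreeGroup.of 2 ^ p * (gcomm (FreeGroup.of 1) (FreeGroup.of 2 * FreeGroup.of 3))⁻¹,
   FreeGroup.of 3 ^ p * (gcomm (FreeGroup.of 1) (FreeGroup.of 3))⁻¹,
   gcomm (FreeGroup.of 0) (FreeGroup.of 1),
   gcomm (FreeGroup.of 2) (FreeGroup.of 3)}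

abbrev JKGroup (p : ℕ) (lam : ℕ × ℕ) : Type := PresentedGroup (jkRels p lam)

def jka₁ (p : ℕ) (lam : ℕ × ℕ) : JKGroup p lam := PresentedGroup.of 0
def jka₂ (p : ℕ) (lam : ℕ × ℕ) : JKGroup p lam := PresentedGroup.of 1
def jkb₁ (p : ℕ) (lam : ℕ × ℕ) : JKGroup p lam := PresentedGroup.of 2
def jkb₂ (p : ℕ) (lam : ℕ × ℕ) : JKGroup p lam := PresentedGroup.of 3

section Commutator

variable {G : Type*} [Group G]

lemma map_gcomm {H : Type*} [Group H] (F : G →* H) (x y : G) :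
    F (gcomm x y) = gcomm (F x) (F y) := by
  simp [gcomm]

lemma gcomm_eq_one_iff_commute {x y : G} : gcomm x y = 1 ↔ Commute x y := by
  rw [show gcomm x y = (y * x)⁻¹ * (x * y) by simp only [gcomm]; group, inv_mul_eq_one]
  exact eq_comm

lemma gcomm_inv (x y : G) : (gcomm x y)⁻¹ = gcomm y x := by
  simp only [gcomm]; group

lemma gcomm_mul_right (x y z : G) : gcomm x (y * z) = gcomm x z * (z⁻¹ * gcomm x y * z) := by
  simp only [gcomm]; group

lemma gcomm_inv_right (x y : G) : gcomm x y⁻¹ = y * (gcomm x y)⁻¹ * y⁻¹ := by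
  simp only [gcomm]; group

lemma gcomm_mul_left (x y z : G) : gcomm (x * y) z = y⁻¹ * gcomm x z * y * gcomm y z := by
  simp only [gcomm]; group

lemma gcomm_mem_center_of_closure_eq_top {S : Set G} (hS : Subgroup.closure S = ⊤)
    (hgen : ∀ s ∈ S, ∀ t ∈ S, gcomm s t ∈ Subgroup.center G) (x y : G) :
    gcomm x y ∈ Subgroup.center G := by
  have hright : ∀ x, (∀ t ∈ S, gcomm x t ∈ Subgroup.center G) →
      ∀ y, gcomm x y ∈ Subgroup.center G := by
    intro x hx y
    induction (hS ▸ Subgroup.mem_top y : y ∈ Subgroup.closure S)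
      using Subgroup.closure_induction with
    | mem t ht => exact hx t ht
    | one => simp [gcomm, one_mem]
    | mul y z _ _ hy hz =>
      rw [gcomm_mul_right]
      exact mul_mem hz (Subgroup.instNormalCenter.conj_mem' _ hy z)
    | inv y _ hy =>
      rw [gcomm_inv_right]
      simpa using Subgroup.instNormalCenter.conj_mem' _ (inv_mem hy) y⁻¹
  refine hright x (fun t ht => ?_) y
  rw [← gcomm_inv]
  exact inv_mem (hright t (hgen t ht) x)

end Commutator

section ClassTwo

variable {G : Type*} [Group G]

lemma mul_sq_of_gcomm_mem_center (hG : ∀ x y : G, gcomm x y ∈ Subgroup.center G) (x y : G) :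
    (x * y) ^ 2 = x ^ 2 * y ^ 2 * gcomm y x := by
  have hc : y * gcomm y x = gcomm y x * y := Subgroup.mem_center_iff.mp (hG y x) y
  calc (x * y) ^ 2 = x * x * y * (gcomm y x * y) := by simp only [sq, gcomm]; group
    _ = x ^ 2 * y ^ 2 * gcomm y x := by rw [← hc]; simp only [sq, mul_assoc]

lemma gcomm_mul_right_of_gcomm_mem_center (hG : ∀ x y : G, gcomm x y ∈ Subgroup.center G)
    (x y z : G) :
    gcomm x (y * z) = gcomm x y * gcomm x z := by
  rw [gcomm_mul_right, mul_assoc z⁻¹, ← Subgroup.mem_center_iff.mp (hG x y) z,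
    inv_mul_cancel_left, Subgroup.mem_center_iff.mp (hG x y)]

lemma gcomm_mul_left_of_gcomm_mem_center (hG : ∀ x y : G, gcomm x y ∈ Subgroup.center G)
    (x y z : G) :
    gcomm (x * y) z = gcomm x z * gcomm y z := by
  rw [gcomm_mul_left, mul_assoc y⁻¹, ← Subgroup.mem_center_iff.mp (hG x z) y,
    inv_mul_cancel_left]

end ClassTwo

lemma ofAdd_one_pow_self (n : ℕ) : Multiplicative.ofAdd (1 : ZMod n) ^ n = 1 := by
  rw [← ofAdd_nsmul, nsmul_one, ZMod.natCast_self, ofAdd_zero]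

namespace JKGroup

variable {p : ℕ} {lam : ℕ × ℕ}

lemma gcomm_mem_center (x y : JKGroup p lam) :
    gcomm x y ∈ Subgroup.center (JKGroup p lam) := by
  refine gcomm_mem_center_of_closure_eq_top (PresentedGroup.closure_range_of _) ?_ x y
  rintro _ ⟨i, rfl⟩ _ ⟨j, rfl⟩
  rw [← Subgroup.centralizer_univ, ← Subgroup.coe_top, ← PresentedGroup.closure_range_of,
    Subgroup.centralizer_closure, Subgroup.mem_centralizer_iff]
  rintro _ ⟨k, rfl⟩
  have h := PresentedGroup.one_of_mem (rels := jkRels p lam) (Or.inl ⟨i, j, k, rfl⟩)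
  rw [map_gcomm, map_gcomm, gcomm_eq_one_iff_commute] at h
  exact h.eq.symm

lemma commute_jka₁_jka₂ : Commute (jka₁ p lam) (jka₂ p lam) := by
  have h := PresentedGroup.one_of_mem (rels := jkRels p lam)
    (x := gcomm (FreeGroup.of 0) (FreeGroup.of 1)) (by simp [jkRels])
  rw [map_gcomm, gcomm_eq_one_iff_commute] at h
  exact h

lemma jka₁_pow : jka₁ p lam ^ p = gcomm (jka₁ p lam) (jkb₁ p lam) := by
  have h := PresentedGroup.mk_eq_mk_of_mul_inv_mem (rels := jkRels p lam)
    (x := FreeGroup.of 0 ^ p) (y := gcomm (FreeGroup.of 0) (FreeGroup.of 2)) (by simp [jkRels])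
  rw [map_pow, map_gcomm] at h
  exact h

lemma jka₂_pow : jka₂ p lam ^ p
    = gcomm (jka₁ p lam) (jkb₁ p lam ^ lam.1 * jkb₂ p lam ^ lam.2) := by
  have h := PresentedGroup.mk_eq_mk_of_mul_inv_mem (rels := jkRels p lam)
    (x := FreeGroup.of 1 ^ p)
    (y := gcomm (FreeGroup.of 0) (FreeGroup.of 2 ^ lam.1 * FreeGroup.of 3 ^ lam.2))
    (by simp [jkRels])
  rw [map_pow, map_gcomm, map_mul, map_pow, map_pow] at h
  exact h

lemma jkb₂_pow : jkb₂ p lam ^ p = gcomm (jka₂ p lam) (jkb₂ p lam) := by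
  have h := PresentedGroup.mk_eq_mk_of_mul_inv_mem (rels := jkRels p lam)
    (x := FreeGroup.of 3 ^ p) (y := gcomm (FreeGroup.of 1) (FreeGroup.of 3)) (by simp [jkRels])
  rw [map_pow, map_gcomm] at h
  exact h

lemma lift_rels_eq_one {A : Type*} [Group A] [IsMulCommutative A] {f : Fin 4 → A}
    (hf : ∀ i, f i ^ p = 1) : ∀ r ∈ jkRels p lam, FreeGroup.lift f r = 1 := by
  have hcomm (v w : FreeGroup (Fin 4)) : FreeGroup.lift f (gcomm v w) = 1 := by
    rw [map_gcomm, gcomm_eq_one_iff_commute]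
    exact isMulCommutative_iff.mp ‹_› _ _
  rintro r (⟨i, j, k, rfl⟩ | hr)
  · exact hcomm _ _
  · simp only [Set.mem_insert_iff, Set.mem_singleton_iff] at hr
    rcases hr with rfl | rfl | rfl | rfl | rfl | rfl <;> simp [hcomm, hf]

def lift {A : Type*} [Group A] [IsMulCommutative A] (f : Fin 4 → A) (hf : ∀ i, f i ^ p = 1) :
    JKGroup p lam →* A :=
  PresentedGroup.toGroup (lift_rels_eq_one hf)

lemma lift_of {A : Type*} [Group A] [IsMulCommutative A] (f : Fin 4 → A)
    (hf : ∀ i, f i ^ p = 1) (i : Fin 4) : lift (lam := lam) f hf (PresentedGroup.of i) = f i :=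
  PresentedGroup.toGroup.of _

def single {G : Type*} [Group G] (k : Fin 4) (x : G) (hx : x ^ p = 1) : JKGroup p lam →* G :=
  (Subgroup.zpowers x).subtype.comp <|
    lift (Pi.mulSingle k ⟨x, Subgroup.mem_zpowers x⟩) fun i => by
      by_cases h : i = k
      · subst h; exact Subtype.ext (by simpa using hx)
      · simp [h]

@[simp]
lemma single_of {G : Type*} [Group G] (k : Fin 4) (x : G) (hx : x ^ p = 1) (i : Fin 4) :
    single (lam := lam) k x hx (PresentedGroup.of i) = (Pi.mulSingle k x : Fin 4 → G) i := by
  by_cases h : i = k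
  · subst h; simp [single, lift_of]
  · simp [single, lift_of, h]

theorem not_forall_comp_comm_of_single {x : JKGroup p lam} (hx : x ^ p = 1) {k l : Fin 4}
    (hkl : k ≠ l) (hfix : single k x hx x = x) (hne : x ≠ 1) :
    ¬ ∀ φ ψ : JKGroup p lam →* JKGroup p lam, φ.comp ψ = ψ.comp φ := by
  intro H
  have h := DFunLike.congr_fun (H (single k x hx) (single l x hx)) (PresentedGroup.of l)
  simp [hkl, hfix] at h
  exact hne h

lemma jka₁_inv_mul_jka₂_pow_eq_one :
    ((jka₁ p (1, 0))⁻¹ * jka₂ p (1, 0)) ^ p = 1 := by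
  rw [commute_jka₁_jka₂.inv_left.mul_pow, inv_pow, jka₁_pow, jka₂_pow, pow_one, pow_zero,
    mul_one, inv_mul_cancel]

lemma jka₁_mul_jka₂_mul_jkb₂_sq_eq_one :
    (jka₁ 2 (1, 1) * jka₂ 2 (1, 1) * jkb₂ 2 (1, 1)) ^ 2 = 1 := by
  set a₁ := jka₁ 2 (1, 1)
  set a₂ := jka₂ 2 (1, 1)
  set b₁ := jkb₁ 2 (1, 1)
  set b₂ := jkb₂ 2 (1, 1)
  have hG := gcomm_mem_center (p := 2) (lam := (1, 1))
  have ha : gcomm a₂ a₁ = 1 := gcomm_eq_one_iff_commute.mpr commute_jka₁_jka₂.symm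
  have hc : gcomm a₁ b₁ * gcomm a₁ b₁ = 1 := by
    rw [← gcomm_mul_left_of_gcomm_mem_center hG, ← sq, jka₁_pow, gcomm_eq_one_iff_commute]
    exact (Subgroup.mem_center_iff.mp (hG a₁ b₁) b₁).symm
  rw [mul_sq_of_gcomm_mem_center hG, mul_sq_of_gcomm_mem_center hG,
    gcomm_mul_right_of_gcomm_mem_center hG, ha, jka₁_pow, jka₂_pow, jkb₂_pow, pow_one,
    pow_one, gcomm_mul_right_of_gcomm_mem_center hG, ← gcomm_inv a₁ b₂, ← gcomm_inv a₂ b₂]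
  set c := gcomm a₁ b₁
  set d := gcomm a₁ b₂
  set e := gcomm a₂ b₂
  have hde : Commute e d := Subgroup.mem_center_iff.mp (hG a₁ b₂) e
  calc c * (c * d) * 1 * e * (d⁻¹ * e⁻¹) = c * c * d * (e * d⁻¹) * e⁻¹ := by group
    _ = 1 := by rw [hde.inv_right.eq, hc]; group

theorem not_forall_comp_comm_one_zero {p : ℕ} (hp : p.Prime) :
    ¬ ∀ φ ψ : JKGroup p (1, 0) →* JKGroup p (1, 0), φ.comp ψ = ψ.comp φ := by
  have : Fact (1 < p) := ⟨hp.one_lt⟩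
  refine not_forall_comp_comm_of_single jka₁_inv_mul_jka₂_pow_eq_one (k := 1) (l := 3)
    (by decide) (by simp [jka₁, jka₂]) fun h => ?_
  have hρ := congrArg (single (lam := (1, 0)) 1 _ (ofAdd_one_pow_self p)) h
  simp [jka₁, jka₂] at hρ

theorem not_forall_comp_comm_two_one_one :
    ¬ ∀ φ ψ : JKGroup 2 (1, 1) →* JKGroup 2 (1, 1), φ.comp ψ = ψ.comp φ := by
  refine not_forall_comp_comm_of_single jka₁_mul_jka₂_mul_jkb₂_sq_eq_one (k := 3) (l := 2)
    (by decide) (by simp [jka₁, jka₂, jkb₂]) fun h => ?_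
  have hρ := congrArg (single (lam := (1, 1)) 0 _ (ofAdd_one_pow_self 2)) h
  simp [jka₁, jka₂, jkb₂] at hρ

end JKGroup

theorem stmt_8 :
    (∀ p : ℕ, p.Prime →
      ¬ ∀ φ ψ : JKGroup p (1, 0) →* JKGroup p (1, 0), φ.comp ψ = ψ.comp φ) ∧
    ¬ ∀ φ ψ : JKGroup 2 (1, 1) →* JKGroup 2 (1, 1), φ.comp ψ = ψ.comp φ :=
  ⟨fun _ hp => JKGroup.not_forall_comp_comm_one_zero hp,
    JKGroup.not_forall_comp_comm_two_one_one⟩
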